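/- arXiv:math/0309167 — 4 statements merged into one kernel-verified Lean document; each statement's English description precedes it below -/
import Mathlib

section
/- If λ ∈ ℝ^n satisfies Σ_{j<k} λ_j λ_k ≥ 0 and Σ_j λ_j ≥ 0, then for every index j one has Σ_{k ≠ j} λ_k ≥ 0. -/
/-!
Since `(∑ λ)² = ∑ λᵢ² + 2 σ₂(λ) ≥ λⱼ²` and `∑ λ ≥ 0`, every entry satisfies `|λⱼ| ≤ ∑ λ`;
omitting `λⱼ` therefore leaves `∑ λ - λⱼ ≥ 0`.
-/

open Finset

theorem sq_sum_eq_sum_sq_add_two_mul_sum_lt {ι R : Type*} [Fintype ι] [LinearOrder ι]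
    [CommSemiring R] (f : ι → R) :
    (∑ i, f i) ^ 2 =
      ∑ i, f i ^ 2 + 2 * ∑ p ∈ univ.filter (fun p : ι × ι => p.1 < p.2), f p.1 * f p.2 := by
  set g : ι × ι → R := fun p => f p.1 * f p.2
  have hswap : ∑ p ∈ univ.filter (fun p : ι × ι => p.2 < p.1), g p =
      ∑ p ∈ univ.filter (fun p : ι × ι => p.1 < p.2), g p :=
    sum_equiv (Equiv.prodComm ι ι) (by simp) (fun p _ => mul_comm _ _)
  have hdiag : ∑ p ∈ univ.filter (fun p : ι × ι => p.1 = p.2), g p = ∑ i, f i ^ 2 := by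
    rw [sum_filter, Fintype.sum_prod_type]
    simp [g, sq]
  calc (∑ i, f i) ^ 2 = ∑ p, g p := by rw [sq, Fintype.sum_mul_sum, Fintype.sum_prod_type]
    _ = ∑ p, ((if p.1 < p.2 then g p else 0) + (if p.1 = p.2 then g p else 0) +
          (if p.2 < p.1 then g p else 0)) := by
        refine sum_congr rfl fun p _ => ?_
        rcases lt_trichotomy p.1 p.2 with h | h | h
        · simp [h, h.ne, h.not_gt]
        · simp [h]
        · simp [h, h.ne', h.not_gt]
    _ = _ := by
        rw [sum_add_distrib, sum_add_distrib, ← sum_filter, ← sum_filter, ← sum_filter,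
          hswap, hdiag]
        ring

theorem abs_le_sum_of_sum_pairs_nonneg {ι R : Type*} [Fintype ι] [LinearOrder ι]
    [CommRing R] [LinearOrder R] [IsStrictOrderedRing R] (f : ι → R)
    (hpairs : 0 ≤ ∑ p ∈ univ.filter (fun p : ι × ι => p.1 < p.2), f p.1 * f p.2)
    (hsum : 0 ≤ ∑ i, f i) (j : ι) :
    |f j| ≤ ∑ i, f i := by
  have hsq : f j ^ 2 ≤ (∑ i, f i) ^ 2 := by
    rw [sq_sum_eq_sum_sq_add_two_mul_sum_lt]
    have := single_le_sum (f := fun i => f i ^ 2) (fun i _ => sq_nonneg (f i)) (mem_univ j)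
    linarith
  simpa [abs_of_nonneg hsum] using sq_le_sq.mp hsq

/-- If `Σ_{j<k} λ_j λ_k ≥ 0` and `Σ_j λ_j ≥ 0`, then every sum omitting one entry
is nonnegative: `Σ_{k ≠ j} λ_k ≥ 0`. -/
theorem stmt_2 (n : ℕ) (l : Fin n → ℝ)
    (hσ : 0 ≤ ∑ p ∈ Finset.univ.filter (fun p : Fin n × Fin n => p.1 < p.2), l p.1 * l p.2)
    (htr : 0 ≤ ∑ j, l j) :
    ∀ j : Fin n, 0 ≤ ∑ k ∈ Finset.univ.erase j, l k := by
  intro j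
  rw [sum_erase_eq_sub (mem_univ j), sub_nonneg]
  exact (le_abs_self _).trans (abs_le_sum_of_sum_pairs_nonneg l hσ htr j)
end

section
/- Let A be an n×n real symmetric matrix with σ_2(A) ≥ 0 and trace(A) ≥ 0, where σ_2(A) is the second elementary symmetric function of the eigenvalues of A. Then for every n×n positive semidefinite symmetric matrix C with C sufficiently small, σ_2(A + C) - σ_2(A) ≥ δ · trace(C), where δ = (1/2) min_j Σ_{k≠j} λ_k ≥ 0 and λ_1,...,λ_n are the eigenvalues of A. -/
open Finset Matrix

/-- `σ₂(A)`, the second elementary symmetric function of the eigenvalues of a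
real symmetric (Hermitian) matrix `A`. -/
noncomputable def sigma2 {n : ℕ} {A : Matrix (Fin n) (Fin n) ℝ} (hA : A.IsHermitian) : ℝ :=
  ∑ p ∈ Finset.univ.filter (fun p : Fin n × Fin n => p.1 < p.2),
    hA.eigenvalues p.1 * hA.eigenvalues p.2

lemma pair_sum {n : ℕ} (f : Fin n → ℝ) :
    (∑ i, f i) ^ 2 = (∑ i, (f i) ^ 2) +
      2 * ∑ p ∈ Finset.univ.filter (fun p : Fin n × Fin n => p.1 < p.2), f p.1 * f p.2 := by
  classical
  have h1 : (∑ i, f i) ^ 2 = ∑ p : Fin n × Fin n, f p.1 * f p.2 := by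
    rw [sq, Finset.sum_mul_sum, Fintype.sum_prod_type]
  have hsplit :
      (∑ p : Fin n × Fin n, f p.1 * f p.2) =
        (∑ p ∈ Finset.univ.filter (fun p : Fin n × Fin n => p.1 < p.2), f p.1 * f p.2) +
        (∑ p ∈ Finset.univ.filter (fun p : Fin n × Fin n => ¬ p.1 < p.2), f p.1 * f p.2) :=
    (Finset.sum_filter_add_sum_filter_not _ _ _).symm
  have hsplit2 :
      (∑ p ∈ Finset.univ.filter (fun p : Fin n × Fin n => ¬ p.1 < p.2), f p.1 * f p.2) =
        (∑ p ∈ Finset.univ.filter (fun p : Fin n × Fin n => p.2 < p.1), f p.1 * f p.2) +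
        (∑ p ∈ Finset.univ.filter (fun p : Fin n × Fin n => p.1 = p.2), f p.1 * f p.2) := by
    rw [← Finset.sum_filter_add_sum_filter_not
      (Finset.univ.filter (fun p : Fin n × Fin n => ¬ p.1 < p.2))
      (fun p : Fin n × Fin n => p.2 < p.1)]
    congr 1
    · congr 1
      ext p
      simp only [Finset.mem_filter, Finset.mem_univ, true_and]
      constructor
      · rintro ⟨h, h'⟩; exact h'
      · intro h; exact ⟨not_lt_of_gt h, h⟩
    · congr 1
      ext p
      simp only [Finset.mem_filter, Finset.mem_univ, true_and]
      constructor
      · rintro ⟨h, h'⟩; exact le_antisymm (not_lt.mp h') (not_lt.mp h)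
      · intro h; exact ⟨by simp [h], by simp [h]⟩
  have hswap :
      (∑ p ∈ Finset.univ.filter (fun p : Fin n × Fin n => p.2 < p.1), f p.1 * f p.2) =
        (∑ p ∈ Finset.univ.filter (fun p : Fin n × Fin n => p.1 < p.2), f p.1 * f p.2) := by
    refine Finset.sum_nbij' (fun p => Prod.swap p) (fun p => Prod.swap p) ?_ ?_ ?_ ?_ ?_
    · intro p hp; simp only [Finset.mem_filter, Finset.mem_univ, true_and] at hp ⊢; exact hp
    · intro p hp; simp only [Finset.mem_filter, Finset.mem_univ, true_and] at hp ⊢; exact hp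
    · intro p _; simp
    · intro p _; simp
    · intro p _; simp [mul_comm]
  have hdiag :
      (∑ p ∈ Finset.univ.filter (fun p : Fin n × Fin n => p.1 = p.2), f p.1 * f p.2) =
        ∑ i, (f i) ^ 2 := by
    refine Finset.sum_nbij' (fun p => p.1) (fun i => (i, i)) ?_ ?_ ?_ ?_ ?_
    · intro p _; simp
    · intro i _; simp
    · intro p hp; simp only [Finset.mem_filter, Finset.mem_univ, true_and] at hp
      simp [Prod.ext_iff, hp]
    · intro i _; simp
    · intro p hp; simp only [Finset.mem_filter, Finset.mem_univ, true_and] at hp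
      rw [← hp, sq]
  rw [h1, hsplit, hsplit2, hswap, hdiag]; ring

lemma herm_trace_eq {n : ℕ} {A : Matrix (Fin n) (Fin n) ℝ} (hA : A.IsHermitian) :
    A.trace = ∑ i, hA.eigenvalues i := by
  conv_lhs => rw [hA.spectral_theorem, Unitary.conjStarAlgAut_apply]
  rw [Matrix.trace_mul_cycle,
    (Matrix.mem_unitaryGroup_iff').mp (hA.eigenvectorUnitary).2, Matrix.one_mul,
    Matrix.trace_diagonal]
  simp

lemma herm_trace_sq_eq {n : ℕ} {A : Matrix (Fin n) (Fin n) ℝ} (hA : A.IsHermitian) :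
    (A * A).trace = ∑ i, (hA.eigenvalues i) ^ 2 := by
  set U : Matrix (Fin n) (Fin n) ℝ := (hA.eigenvectorUnitary : Matrix (Fin n) (Fin n) ℝ) with hU
  have h1 : star U * U = 1 := (Matrix.mem_unitaryGroup_iff').mp (hA.eigenvectorUnitary).2
  set D : Matrix (Fin n) (Fin n) ℝ := diagonal (RCLike.ofReal ∘ hA.eigenvalues) with hD
  have hAe : A = U * D * star U := hA.spectral_theorem
  have key : A * A = U * (D * D) * star U := by
    rw [hAe]
    simp only [Matrix.mul_assoc]
    rw [← Matrix.mul_assoc (star U) U, h1, Matrix.one_mul]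
  rw [key, Matrix.trace_mul_cycle, ← Matrix.mul_assoc, h1, Matrix.one_mul]
  rw [hD, Matrix.diagonal_mul_diagonal, Matrix.trace_diagonal]
  simp [sq]

lemma psd_trace_nonneg {n : ℕ} {C : Matrix (Fin n) (Fin n) ℝ} (hC : C.PosSemidef) :
    0 ≤ C.trace := by
  rw [Matrix.trace]
  refine Finset.sum_nonneg fun i _ => ?_
  exact hC.diag_nonneg

open scoped MatrixOrder in
lemma psd_trace_mul_nonneg {n : ℕ} {B C : Matrix (Fin n) (Fin n) ℝ}
    (hB : B.PosSemidef) (hC : C.PosSemidef) : 0 ≤ (B * C).trace := by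
  have hS : CFC.sqrt B * CFC.sqrt B = B := CFC.sqrt_mul_sqrt_self B hB.nonneg
  have h1 : (B * C).trace = (CFC.sqrt B * C * CFC.sqrt B).trace := by
    conv_lhs => rw [← hS]
    rw [Matrix.mul_assoc, Matrix.trace_mul_comm]
  have h2 : (CFC.sqrt B * C * CFC.sqrt B).PosSemidef := by
    have := hC.mul_mul_conjTranspose_same (CFC.sqrt B)
    rwa [(CFC.sqrt_nonneg B).posSemidef.1.eq] at this
  rw [h1]; exact psd_trace_nonneg h2

lemma sigma2_eq {n : ℕ} {A : Matrix (Fin n) (Fin n) ℝ} (hA : A.IsHermitian) :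
    sigma2 hA = (A.trace ^ 2 - (A * A).trace) / 2 := by
  have := pair_sum hA.eigenvalues
  rw [herm_trace_eq hA, herm_trace_sq_eq hA]
  unfold sigma2
  linarith

/-- If `A` is real symmetric with `σ₂(A) ≥ 0` and `trace(A) ≥ 0`, and
`δ = (1/2) min_j Σ_{k≠j} λ_k` (which is `≥ 0`), then for every positive
semidefinite `C` sufficiently small, `σ₂(A+C) − σ₂(A) ≥ δ · trace(C)`. -/
theorem stmt_4 (n : ℕ) (hn : 0 < n) (A : Matrix (Fin n) (Fin n) ℝ) (hA : A.IsHermitian)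
    (hσ : 0 ≤ sigma2 hA) (htr : 0 ≤ A.trace)
    (δ : ℝ)
    (hδ : δ = (1 / 2) *
      (Finset.univ.inf' (Finset.univ_nonempty_iff.mpr ⟨⟨0, hn⟩⟩)
        (fun j : Fin n => ∑ k ∈ Finset.univ.erase j, hA.eigenvalues k))) :
    0 ≤ δ ∧
      ∃ ε > 0, ∀ C : Matrix (Fin n) (Fin n) ℝ, ∀ hC : C.PosSemidef,
        (∀ i j, |C i j| < ε) →
          δ * C.trace ≤ sigma2 (hA.add hC.1) - sigma2 hA := by
  have htr_eq : A.trace = ∑ i, hA.eigenvalues i := herm_trace_eq hA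
  have hsq : (∑ i, hA.eigenvalues i) ^ 2 = (∑ i, (hA.eigenvalues i) ^ 2) + 2 * sigma2 hA :=
    pair_sum hA.eigenvalues
  -- each eigenvalue is at most the trace
  have hlam : ∀ j, hA.eigenvalues j ≤ A.trace := by
    intro j
    have h1 : (hA.eigenvalues j) ^ 2 ≤ ∑ i, (hA.eigenvalues i) ^ 2 :=
      Finset.single_le_sum (f := fun i => hA.eigenvalues i ^ 2)
        (fun i _ => sq_nonneg _) (Finset.mem_univ j)
    nlinarith [htr_eq, hsq]
  have herase : ∀ j : Fin n, (∑ k ∈ Finset.univ.erase j, hA.eigenvalues k)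
      = A.trace - hA.eigenvalues j := by
    intro j
    rw [Finset.sum_erase_eq_sub (Finset.mem_univ j), htr_eq]
  have hδ0 : 0 ≤ δ := by
    rw [hδ]
    have : (0:ℝ) ≤ Finset.univ.inf' (Finset.univ_nonempty_iff.mpr ⟨⟨0, hn⟩⟩)
        (fun j : Fin n => ∑ k ∈ Finset.univ.erase j, hA.eigenvalues k) := by
      refine Finset.le_inf' _ _ fun j _ => ?_
      rw [herase j]; linarith [hlam j]
    linarith
  refine ⟨hδ0, 1, one_pos, fun C hC _ => ?_⟩
  set s : ℝ := A.trace - 2 * δ with hs_def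
  have hs : ∀ j, hA.eigenvalues j ≤ s := by
    intro j
    have h1 : δ ≤ (1/2) * (∑ k ∈ Finset.univ.erase j, hA.eigenvalues k) := by
      rw [hδ]
      have := Finset.inf'_le (f := fun j : Fin n => ∑ k ∈ Finset.univ.erase j, hA.eigenvalues k)
        (Finset.mem_univ j)
      linarith
    rw [herase j] at h1
    rw [hs_def]; linarith
  -- s • 1 - A is positive semidefinite
  have hpsd : ((s • (1 : Matrix (Fin n) (Fin n) ℝ)) - A).PosSemidef := by
    set U : Matrix (Fin n) (Fin n) ℝ := (hA.eigenvectorUnitary : Matrix (Fin n) (Fin n) ℝ)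
    have h1 : U * star U = 1 := (Matrix.mem_unitaryGroup_iff).mp (hA.eigenvectorUnitary).2
    have key : (s • (1 : Matrix (Fin n) (Fin n) ℝ)) - A =
        U * diagonal (fun i => s - hA.eigenvalues i) * star U := by
      have hd : diagonal (fun i => s - hA.eigenvalues i) =
          s • (1 : Matrix (Fin n) (Fin n) ℝ) - diagonal (RCLike.ofReal ∘ hA.eigenvalues) := by
        ext i j
        rcases eq_or_ne i j with rfl | h
        · simp [Matrix.diagonal_apply_eq, Matrix.one_apply_eq, Matrix.sub_apply]
        · simp [Matrix.diagonal_apply_ne _ h, Matrix.one_apply_ne h, Matrix.sub_apply]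
      rw [hd, Matrix.mul_sub, Matrix.sub_mul]
      congr 1
      · rw [Matrix.mul_smul, Matrix.smul_mul, Matrix.mul_one, h1]
      · exact hA.spectral_theorem
    rw [key, Matrix.star_eq_conjTranspose]
    refine Matrix.PosSemidef.mul_mul_conjTranspose_same ?_ U
    refine Matrix.posSemidef_diagonal_iff.mpr fun i => ?_
    linarith [hs i]
  have htrC : 0 ≤ C.trace := psd_trace_nonneg hC
  have hAC : (A * C).trace ≤ s * C.trace := by
    have h0 : 0 ≤ (((s • (1 : Matrix (Fin n) (Fin n) ℝ)) - A) * C).trace :=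
      psd_trace_mul_nonneg hpsd hC
    rw [Matrix.sub_mul, Matrix.smul_mul, Matrix.one_mul] at h0
    rw [Matrix.trace_sub, Matrix.trace_smul] at h0
    simpa using h0
  -- trace (C*C) ≤ (trace C)^2
  have hCC : (C * C).trace ≤ C.trace ^ 2 := by
    have h1 : (C * C).trace = ∑ i, (hC.1.eigenvalues i) ^ 2 := herm_trace_sq_eq hC.1
    have h2 : C.trace = ∑ i, hC.1.eigenvalues i := herm_trace_eq hC.1
    have h3 := pair_sum hC.1.eigenvalues
    have h4 : 0 ≤ ∑ p ∈ Finset.univ.filter (fun p : Fin n × Fin n => p.1 < p.2),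
        hC.1.eigenvalues p.1 * hC.1.eigenvalues p.2 := by
      refine Finset.sum_nonneg fun p _ => ?_
      exact mul_nonneg (hC.eigenvalues_nonneg _) (hC.eigenvalues_nonneg _)
    rw [h1, h2]; linarith
  -- expand sigma2 of the sum
  have hherm : (A + C).IsHermitian := hA.add hC.1
  have hexp : sigma2 (hA.add hC.1) - sigma2 hA =
      A.trace * C.trace + C.trace ^ 2 / 2 - (A * C).trace - (C * C).trace / 2 := by
    rw [sigma2_eq (hA.add hC.1), sigma2_eq hA]
    have h1 : (A + C).trace = A.trace + C.trace := Matrix.trace_add A C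
    have h2 : ((A + C) * (A + C)).trace =
        (A * A).trace + 2 * (A * C).trace + (C * C).trace := by
      rw [Matrix.add_mul, Matrix.mul_add, Matrix.mul_add, Matrix.trace_add, Matrix.trace_add,
        Matrix.trace_add, Matrix.trace_mul_comm C A]
      ring
    rw [h1, h2]; ring
  have hkey : (A * C).trace ≤ A.trace * C.trace - 2 * (δ * C.trace) := by
    have : s * C.trace = A.trace * C.trace - 2 * (δ * C.trace) := by rw [hs_def]; ring
    linarith
  have hδC : 0 ≤ δ * C.trace := mul_nonneg hδ0 htrC
  rw [hexp]
  linarith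
end

section
/- Let u₁, u₂ be C² functions on an open set Ω ⊂ ℝ^{2n+1}, each σ₂(𝓗)-convex (i.e., trace(𝓗(u_p)) ≥ 0 and σ₂(𝓗(u_p)) ≥ 0 on Ω), and let f : ℝ² → ℝ be C², convex, and nondecreasing in each variable. Then w = f(u₁, u₂) satisfies, for every h ∈ ℝ^{2n}, ⟨𝓗(w)h, h⟩ = Σ_p (∂f/∂u_p)⟨𝓗(u_p)h, h⟩ + Σ_{p,q} (∂²f/∂u_q∂u_p)(Σ_i X_i u_q h_i)(Σ_j X_j u_p h_j), and consequently w is σ₂(𝓗)-convex. -/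
/-- A point of the Heisenberg group `ℍⁿ`: `ξ = (x, y, t) ∈ ℝⁿ × ℝⁿ × ℝ`. -/
abbrev HPoint (n : ℕ) := (Fin n → ℝ) × (Fin n → ℝ) × ℝ

/-- The coefficient vector of the Heisenberg vector field `X_j` at the point `ξ`:
for `j ≤ n`, `X_j = ∂_{x_j} + 2 y_j ∂_t`; for `n < j ≤ 2n`, `X_j = ∂_{y_{j-n}} − 2 x_{j-n} ∂_t`. -/
noncomputable def Xvec (n : ℕ) (j : Fin (2 * n)) (ξ : HPoint n) : HPoint n :=
  if h : (j : ℕ) < n then (Pi.single ⟨j, h⟩ 1, 0, 2 * ξ.2.1 ⟨j, h⟩)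
  else (0, Pi.single ⟨(j : ℕ) - n, by have := j.isLt; omega⟩ 1,
        -2 * ξ.1 ⟨(j : ℕ) - n, by have := j.isLt; omega⟩)

/-- The Heisenberg vector field `X_j` acting as a first-order differential operator. -/
noncomputable def X (n : ℕ) (j : Fin (2 * n)) (u : HPoint n → ℝ) (ξ : HPoint n) : ℝ :=
  fderiv ℝ u ξ (Xvec n j ξ)

/-- The derivative `∂_t`. -/
noncomputable def Dt (n : ℕ) (u : HPoint n → ℝ) (ξ : HPoint n) : ℝ :=
  fderiv ℝ u ξ (0, 0, 1)

/-- The symmetrized horizontal Hessian `𝓗(u) = [(X_iX_ju + X_jX_iu)/2]`. -/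
noncomputable def Hmat (n : ℕ) (u : HPoint n → ℝ) (ξ : HPoint n) :
    Matrix (Fin (2 * n)) (Fin (2 * n)) ℝ :=
  Matrix.of fun i j => (X n i (X n j u) ξ + X n j (X n i u) ξ) / 2

/-- The standard basis vectors of `ℝ²`. -/
noncomputable def e2 : Fin 2 → ℝ × ℝ := ![(1, 0), (0, 1)]

/-- `σ₂` of a symmetric matrix, expressed through traces:
`σ₂(M) = (1/2)[(trace M)² − trace(M²)]`. -/
noncomputable def sig2 {m : ℕ} (M : Matrix (Fin m) (Fin m) ℝ) : ℝ :=
  (1 / 2) * ((M.trace) ^ 2 - (M * M).trace)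

/-! ### Auxiliary matrix-cone lemmas -/

lemma trace_mul_expand {m : ℕ} (A B : Matrix (Fin m) (Fin m) ℝ) :
    (A * B).trace = ∑ i, ∑ j, A i j * B j i := by
  simp [Matrix.trace, Matrix.mul_apply, Matrix.diag]

/-- The closed cone condition used for `σ₂`-convexity. -/
def InCone {m : ℕ} (M : Matrix (Fin m) (Fin m) ℝ) : Prop :=
  M.IsSymm ∧ 0 ≤ M.trace ∧ 0 ≤ sig2 M

lemma InCone.smul {m : ℕ} {M : Matrix (Fin m) (Fin m) ℝ} (hM : InCone M) {c : ℝ}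
    (hc : 0 ≤ c) : InCone (c • M) := by
  obtain ⟨hs, ht, hσ⟩ := hM
  refine ⟨by simp [Matrix.IsSymm, Matrix.transpose_smul, hs.eq], ?_, ?_⟩
  · simpa [Matrix.trace_smul, smul_eq_mul] using mul_nonneg hc ht
  · have : sig2 (c • M) = c ^ 2 * sig2 M := by
      simp only [sig2, Matrix.trace_smul, Matrix.smul_mul, Matrix.mul_smul, smul_smul,
        smul_eq_mul]
      ring
    rw [this]
    exact mul_nonneg (sq_nonneg c) hσ

lemma InCone.add {m : ℕ} {A B : Matrix (Fin m) (Fin m) ℝ} (hA : InCone A) (hB : InCone B) :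
    InCone (A + B) := by
  obtain ⟨hAs, hAt, hAσ⟩ := hA
  obtain ⟨hBs, hBt, hBσ⟩ := hB
  refine ⟨by simp [Matrix.IsSymm, Matrix.transpose_add, hAs.eq, hBs.eq],
    by rw [Matrix.trace_add]; exact add_nonneg hAt hBt, ?_⟩
  have hABkey : (A * B).trace ≤ A.trace * B.trace := by
    have hAB : (A * B).trace = ∑ i, ∑ j, A i j * B i j := by
      rw [trace_mul_expand]
      refine Finset.sum_congr rfl fun i _ => Finset.sum_congr rfl fun j _ => ?_
      rw [← hBs.apply j i]
    have hA2 : (A * A).trace = ∑ i, ∑ j, (A i j) ^ 2 := by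
      rw [trace_mul_expand]
      refine Finset.sum_congr rfl fun i _ => Finset.sum_congr rfl fun j _ => ?_
      rw [← hAs.apply j i]; ring
    have hB2 : (B * B).trace = ∑ i, ∑ j, (B i j) ^ 2 := by
      rw [trace_mul_expand]
      refine Finset.sum_congr rfl fun i _ => Finset.sum_congr rfl fun j _ => ?_
      rw [← hBs.apply j i]; ring
    have hCS := Finset.sum_mul_sq_le_sq_mul_sq (Finset.univ ×ˢ Finset.univ)
        (fun x : Fin m × Fin m => A x.1 x.2) (fun x : Fin m × Fin m => B x.1 x.2)
    rw [← Finset.sum_product' (f := fun i j => A i j * B i j),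
        ← Finset.sum_product' (f := fun i j => (A i j) ^ 2),
        ← Finset.sum_product' (f := fun i j => (B i j) ^ 2)] at *
    have h1 : (A * A).trace ≤ A.trace ^ 2 := by have := hAσ; simp [sig2] at this; linarith
    have h2 : (B * B).trace ≤ B.trace ^ 2 := by have := hBσ; simp [sig2] at this; linarith
    rw [hAB]
    rw [hA2] at h1; rw [hB2] at h2
    nlinarith [hCS, mul_nonneg hAt hBt, Finset.sum_nonneg
      (fun x (_ : x ∈ Finset.univ ×ˢ Finset.univ) => sq_nonneg (A x.1 x.2))]
  have hexp : sig2 (A + B) = sig2 A + sig2 B + (A.trace * B.trace - (A * B).trace) := by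
    have hBA : (B * A).trace = (A * B).trace := Matrix.trace_mul_comm B A
    simp only [sig2, Matrix.add_mul, Matrix.mul_add, Matrix.trace_add, hBA, Matrix.trace_add]
    ring
  rw [hexp]
  have : 0 ≤ A.trace * B.trace - (A * B).trace := by linarith
  linarith

/-- A symmetric matrix with nonnegative quadratic form lies in the cone. -/
lemma inCone_of_quadform {m : ℕ} {B : Matrix (Fin m) (Fin m) ℝ} (hBs : B.IsSymm)
    (h : ∀ v : Fin m → ℝ, 0 ≤ ∑ i, ∑ j, B i j * v i * v j) : InCone B := by
  have hdiag : ∀ i, 0 ≤ B i i := by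
    intro i
    have := h (Pi.single i 1)
    simpa [Pi.single_apply, Finset.sum_ite_eq', Finset.sum_ite_eq] using this
  have htr : 0 ≤ B.trace := Finset.sum_nonneg fun i _ => hdiag i
  refine ⟨hBs, htr, ?_⟩
  have hminor : ∀ i j, B i j * B j i ≤ B i i * B j j := by
    intro i j
    rcases eq_or_ne i j with rfl | hij
    · exact le_refl _
    · have hq : ∀ x : ℝ, 0 ≤ B i i * (x * x) + (B i j + B j i) * x + B j j := by
        intro x
        set vv : Fin m → ℝ := fun k => if k = i then x else if k = j then 1 else 0 with hvv
        have hvi : vv i = x := by simp [hvv]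
        have hvj : vv j = 1 := by simp [hvv, Ne.symm hij]
        have hv0 : ∀ k, k ≠ i → k ≠ j → vv k = 0 := by
          intro k h1 h2; simp [hvv, h1, h2]
        have hsum := h vv
        have houter : ∑ k, ∑ l, B k l * vv k * vv l
            = (∑ l, B i l * vv i * vv l) + (∑ l, B j l * vv j * vv l) := by
          refine Finset.sum_eq_add_of_mem i j (Finset.mem_univ i) (Finset.mem_univ j) hij ?_
          intro c _ hc
          apply Finset.sum_eq_zero
          intro l _
          rw [hv0 c hc.1 hc.2]; ring
        have hinner : ∀ k : Fin m, ∑ l, B k l * vv k * vv l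
            = B k i * vv k * vv i + B k j * vv k * vv j := by
          intro k
          refine Finset.sum_eq_add_of_mem i j (Finset.mem_univ i) (Finset.mem_univ j) hij ?_
          intro c _ hc
          rw [hv0 c hc.1 hc.2]; ring
        rw [houter, hinner i, hinner j, hvi, hvj] at hsum
        nlinarith [hsum]
      have hd := discrim_le_zero hq
      rw [discrim] at hd
      have hsym : B j i = B i j := hBs.apply i j
      nlinarith [hd, hsym]
  have htrsq : (B * B).trace ≤ B.trace ^ 2 := by
    rw [trace_mul_expand]
    have hexp2 : B.trace ^ 2 = ∑ i, ∑ j, B i i * B j j := by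
      simp [Matrix.trace, Matrix.diag, sq, Finset.sum_mul_sum]
    rw [hexp2]
    exact Finset.sum_le_sum fun i _ => Finset.sum_le_sum fun j _ => hminor i j
  simp only [sig2]
  linarith

/-! ### Auxiliary 1-D analysis lemmas -/

lemma pair_decomp (a b : ℝ) : (a, b) = a • e2 0 + b • e2 1 := by
  simp [e2, Prod.ext_iff]

lemma clm_pair (L : (ℝ × ℝ) →L[ℝ] ℝ) (a b : ℝ) :
    L (a, b) = a * L (e2 0) + b * L (e2 1) := by
  rw [pair_decomp a b, map_add, map_smul, map_smul]; simp

lemma deriv_nonneg_of_monotone {g : ℝ → ℝ} {d x : ℝ} (hg : Monotone g)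
    (hd : HasDerivAt g d x) : 0 ≤ d := by
  have h := hasDerivAt_iff_tendsto_slope.mp hd
  refine ge_of_tendsto h ?_
  filter_upwards [self_mem_nhdsWithin] with t ht
  have ht' : t ≠ x := ht
  rcases lt_or_gt_of_ne ht' with h1 | h1
  · rw [slope_def_field]
    refine div_nonneg_iff.mpr (Or.inr ⟨?_, ?_⟩)
    · linarith [hg h1.le]
    · linarith
  · rw [slope_def_field]
    apply div_nonneg
    · linarith [hg h1.le]
    · linarith

lemma hasDerivAt_line {f : ℝ × ℝ → ℝ} (hf : Differentiable ℝ f) (z v : ℝ × ℝ) (t : ℝ) :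
    HasDerivAt (fun s => f (z + s • v)) (fderiv ℝ f (z + t • v) v) t := by
  have h1 : HasDerivAt (fun s : ℝ => z + s • v) v t := by
    simpa using ((hasDerivAt_id t).smul_const v).const_add z
  have h2 : HasFDerivAt f (fderiv ℝ f (z + t • v)) (z + t • v) := (hf _).hasFDerivAt
  have := h2.comp_hasDerivAt t h1
  exact this

lemma fderiv_e2_nonneg {f : ℝ × ℝ → ℝ} (hf : ContDiff ℝ 2 f)
    (hmono1 : ∀ a b c : ℝ, a ≤ b → f (a, c) ≤ f (b, c))
    (hmono2 : ∀ a b c : ℝ, a ≤ b → f (c, a) ≤ f (c, b))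
    (z : ℝ × ℝ) (p : Fin 2) : 0 ≤ fderiv ℝ f z (e2 p) := by
  have hfD : Differentiable ℝ f := hf.differentiable (by norm_num)
  have hD := hasDerivAt_line hfD z (e2 p) 0
  rw [show z + (0 : ℝ) • e2 p = z by simp] at hD
  refine deriv_nonneg_of_monotone ?_ hD
  intro s t hst
  fin_cases p
  · have heq : ∀ r : ℝ, z + r • ((1 : ℝ), (0 : ℝ)) = (z.1 + r, z.2) := by
      intro r; ext <;> simp
    show f (z + s • ((1 : ℝ), (0 : ℝ))) ≤ f (z + t • ((1 : ℝ), (0 : ℝ)))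
    rw [heq s, heq t]
    exact hmono1 _ _ _ (by linarith)
  · have heq : ∀ r : ℝ, z + r • ((0 : ℝ), (1 : ℝ)) = (z.1, z.2 + r) := by
      intro r; ext <;> simp
    show f (z + s • ((0 : ℝ), (1 : ℝ))) ≤ f (z + t • ((0 : ℝ), (1 : ℝ)))
    rw [heq s, heq t]
    exact hmono2 _ _ _ (by linarith)

lemma hessian_quadform_nonneg {f : ℝ × ℝ → ℝ} (hf : ContDiff ℝ 2 f)
    (hconv : ConvexOn ℝ Set.univ f) (z : ℝ × ℝ) (a : Fin 2 → ℝ) :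
    0 ≤ ∑ p : Fin 2, ∑ q : Fin 2,
      fderiv ℝ (fun y => fderiv ℝ f y (e2 p)) z (e2 q) * a q * a p := by
  have hfD : Differentiable ℝ f := hf.differentiable (by norm_num)
  set v : ℝ × ℝ := (a 0, a 1) with hv
  have hC1 : ContDiff ℝ 1 (fderiv ℝ f) := hf.fderiv_right (by norm_num)
  have hgD : ∀ w : ℝ × ℝ, Differentiable ℝ (fun y => fderiv ℝ f y w) := fun w =>
    (hC1.differentiable (by norm_num)).clm_apply (differentiable_const w)
  set g : ℝ → ℝ := fun t => f (z + t • v) with hg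
  have hgderiv : ∀ t, HasDerivAt g (fderiv ℝ f (z + t • v) v) t := fun t =>
    hasDerivAt_line hfD z v t
  have hgdiff : ∀ t, DifferentiableAt ℝ g t := fun t => (hgderiv t).differentiableAt
  have hgconv : ConvexOn ℝ Set.univ g := by
    have hA : ConvexOn ℝ (⇑(AffineMap.lineMap z (z + v)) ⁻¹' Set.univ)
        (f ∘ ⇑(AffineMap.lineMap z (z + v))) := hconv.comp_affineMap _
    have : (f ∘ ⇑(AffineMap.lineMap z (z + v))) = g := by
      funext t
      simp [g, AffineMap.lineMap_apply, add_comm]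
    rwa [this, Set.preimage_univ] at hA
  have hderiv_eq : deriv g = fun t => fderiv ℝ f (z + t • v) v := by
    funext t; exact (hgderiv t).deriv
  have hmono : Monotone (deriv g) := by
    have := hgconv.monotoneOn_deriv (fun x _ => hgdiff x)
    exact monotoneOn_univ.mp this
  have hD2 : HasDerivAt (deriv g) (fderiv ℝ (fun y => fderiv ℝ f y v) z v) 0 := by
    rw [hderiv_eq]
    have := hasDerivAt_line (f := fun y => fderiv ℝ f y v) (hgD v) z v 0
    rw [show z + (0 : ℝ) • v = z by simp] at this
    exact this
  have hnn : 0 ≤ fderiv ℝ (fun y => fderiv ℝ f y v) z v := deriv_nonneg_of_monotone hmono hD2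
  have hexp : fderiv ℝ (fun y => fderiv ℝ f y v) z v
      = ∑ p : Fin 2, ∑ q : Fin 2,
          fderiv ℝ (fun y => fderiv ℝ f y (e2 p)) z (e2 q) * a q * a p := by
    have hfun : (fun y => fderiv ℝ f y v)
        = fun y => a 0 * fderiv ℝ f y (e2 0) + a 1 * fderiv ℝ f y (e2 1) := by
      funext y
      rw [hv, clm_pair]
    rw [hfun]
    rw [fderiv_fun_add ((hgD (e2 0)).differentiableAt.const_mul _)
        ((hgD (e2 1)).differentiableAt.const_mul _)]
    rw [fderiv_const_mul (hgD (e2 0)).differentiableAt,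
        fderiv_const_mul (hgD (e2 1)).differentiableAt]
    simp only [ContinuousLinearMap.add_apply, ContinuousLinearMap.coe_smul', Pi.smul_apply,
      smul_eq_mul, Fin.sum_univ_two]
    have h0 : ∀ p : Fin 2, (fderiv ℝ (fun y => fderiv ℝ f y (e2 p)) z) v
        = fderiv ℝ (fun y => fderiv ℝ f y (e2 p)) z (e2 0) * a 0
          + fderiv ℝ (fun y => fderiv ℝ f y (e2 p)) z (e2 1) * a 1 := by
      intro p
      rw [hv, clm_pair]; ring
    rw [h0 0, h0 1]; ring
  rw [← hexp]; exact hnn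

/-! ### Heisenberg differentiability lemmas -/

lemma xvec_differentiable (n : ℕ) (j : Fin (2 * n)) : Differentiable ℝ (Xvec n j) := by
  by_cases h : (j : ℕ) < n
  · have : Xvec n j = fun ξ : HPoint n => ((Pi.single ⟨j, h⟩ 1 : Fin n → ℝ), (0 : Fin n → ℝ),
        2 * ξ.2.1 ⟨j, h⟩) := by
      funext ξ; simp [Xvec, h]
    rw [this]; fun_prop
  · have : Xvec n j = fun ξ : HPoint n => ((0 : Fin n → ℝ),
        (Pi.single ⟨(j : ℕ) - n, by have := j.isLt; omega⟩ 1 : Fin n → ℝ),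
        -2 * ξ.1 ⟨(j : ℕ) - n, by have := j.isLt; omega⟩) := by
      funext ξ; simp [Xvec, h]
    rw [this]; fun_prop

lemma X_differentiableAt {n : ℕ} {u : HPoint n → ℝ} {ξ : HPoint n}
    (hu : ContDiffAt ℝ 2 u ξ) (j : Fin (2 * n)) :
    DifferentiableAt ℝ (X n j u) ξ := by
  have h1 : ContDiffAt ℝ 1 (fderiv ℝ u) ξ := hu.fderiv_right (by norm_num)
  exact DifferentiableAt.clm_apply (h1.differentiableAt (by norm_num)) (xvec_differentiable n j ξ)

/-! ### The summation lemma -/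

lemma bsum (m : ℕ) (D : Fin 2 → Fin 2 → ℝ) (Y : Fin 2 → Fin m → ℝ) (h : Fin m → ℝ) :
    ∑ i, ∑ j, (∑ p : Fin 2, ∑ q : Fin 2,
        D q p * (Y q i * Y p j + Y q j * Y p i) / 2) * h i * h j
      = ∑ p : Fin 2, ∑ q : Fin 2,
          D q p * (∑ i, Y q i * h i) * (∑ j, Y p j * h j) := by
  have hPQ : ∀ a b : Fin 2, (∑ i, ∑ j, Y a i * Y b j * h i * h j)
      = (∑ i, Y a i * h i) * (∑ j, Y b j * h j) := by
    intro a b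
    rw [Finset.sum_mul_sum]
    apply Finset.sum_congr rfl
    intro i _
    apply Finset.sum_congr rfl
    intro j _
    ring
  have step1 : ∑ i, ∑ j, (∑ p : Fin 2, ∑ q : Fin 2,
        D q p * (Y q i * Y p j + Y q j * Y p i) / 2) * h i * h j
      = ∑ i, ∑ j,
        ( D 0 0 / 2 * (Y 0 i * Y 0 j * h i * h j) + D 0 0 / 2 * (Y 0 i * Y 0 j * h i * h j)
        + D 1 0 / 2 * (Y 1 i * Y 0 j * h i * h j) + D 1 0 / 2 * (Y 0 i * Y 1 j * h i * h j)
        + D 0 1 / 2 * (Y 0 i * Y 1 j * h i * h j) + D 0 1 / 2 * (Y 1 i * Y 0 j * h i * h j)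
        + D 1 1 / 2 * (Y 1 i * Y 1 j * h i * h j) + D 1 1 / 2 * (Y 1 i * Y 1 j * h i * h j)) := by
    apply Finset.sum_congr rfl
    intro i _
    apply Finset.sum_congr rfl
    intro j _
    simp only [Fin.sum_univ_two]
    ring
  rw [step1]
  simp only [Finset.sum_add_distrib, ← Finset.mul_sum]
  rw [hPQ 0 0, hPQ 1 0, hPQ 0 1, hPQ 1 1]
  simp only [Fin.sum_univ_two]
  ring

/-- If `u₁, u₂` are `C²` and `σ₂(𝓗)`-convex on an open `Ω ⊆ ℝ^{2n+1}` and
`f : ℝ² → ℝ` is `C²`, convex and nondecreasing in each variable, then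
`w = f(u₁, u₂)` satisfies the chain-rule identity
`⟨𝓗(w)h, h⟩ = Σ_p ∂f/∂u_p ⟨𝓗(u_p)h, h⟩
  + Σ_{p,q} ∂²f/∂u_q∂u_p (Σ_i X_iu_q h_i)(Σ_j X_ju_p h_j)`,
and consequently `w` is `σ₂(𝓗)`-convex. -/
theorem stmt_12 (n : ℕ) (Ω : Set (HPoint n)) (hΩ : IsOpen Ω)
    (u : Fin 2 → (HPoint n → ℝ)) (hu : ∀ p, ContDiffOn ℝ 2 (u p) Ω)
    (hconv : ∀ p, ∀ ξ ∈ Ω, 0 ≤ (Hmat n (u p) ξ).trace ∧ 0 ≤ sig2 (Hmat n (u p) ξ))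
    (f : ℝ × ℝ → ℝ) (hf : ContDiff ℝ 2 f) (hfconv : ConvexOn ℝ Set.univ f)
    (hmono1 : ∀ a b c : ℝ, a ≤ b → f (a, c) ≤ f (b, c))
    (hmono2 : ∀ a b c : ℝ, a ≤ b → f (c, a) ≤ f (c, b))
    (w : HPoint n → ℝ) (hw : w = fun ξ => f (u 0 ξ, u 1 ξ)) :
    (∀ ξ ∈ Ω, ∀ h : Fin (2 * n) → ℝ,
      ∑ i, ∑ j, Hmat n w ξ i j * h i * h j =
        (∑ p, fderiv ℝ f (u 0 ξ, u 1 ξ) (e2 p) *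
          ∑ i, ∑ j, Hmat n (u p) ξ i j * h i * h j)
        + ∑ p, ∑ q,
            fderiv ℝ (fun z => fderiv ℝ f z (e2 q)) (u 0 ξ, u 1 ξ) (e2 p) *
              (∑ i, X n i (u q) ξ * h i) * (∑ j, X n j (u p) ξ * h j)) ∧
    (∀ ξ ∈ Ω, 0 ≤ (Hmat n w ξ).trace ∧ 0 ≤ sig2 (Hmat n w ξ)) := by
  subst hw
  classical
  set z : HPoint n → ℝ × ℝ := fun ζ => (u 0 ζ, u 1 ζ) with hzdef
  have hfD : Differentiable ℝ f := hf.differentiable (by norm_num)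
  have hu2 : ∀ p : Fin 2, ∀ ζ ∈ Ω, ContDiffAt ℝ 2 (u p) ζ := fun p ζ hζ =>
    (hu p).contDiffAt (hΩ.mem_nhds hζ)
  have huD : ∀ p : Fin 2, ∀ ζ ∈ Ω, DifferentiableAt ℝ (u p) ζ := fun p ζ hζ =>
    (hu2 p ζ hζ).differentiableAt (by norm_num)
  have hzD : ∀ ζ ∈ Ω, DifferentiableAt ℝ z ζ := fun ζ hζ => (huD 0 ζ hζ).prodMk (huD 1 ζ hζ)
  have hC1 : ContDiff ℝ 1 (fderiv ℝ f) := hf.fderiv_right (by norm_num)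
  have hgD : ∀ v : ℝ × ℝ, Differentiable ℝ (fun y => fderiv ℝ f y v) := fun v =>
    (hC1.differentiable (by norm_num)).clm_apply (differentiable_const v)
  -- first-order chain rule
  have step1 : ∀ ζ ∈ Ω, ∀ j, X n j (fun ξ => f (u 0 ξ, u 1 ξ)) ζ
      = fderiv ℝ f (z ζ) (e2 0) * X n j (u 0) ζ + fderiv ℝ f (z ζ) (e2 1) * X n j (u 1) ζ := by
    intro ζ hζ j
    show fderiv ℝ (fun ξ => f (u 0 ξ, u 1 ξ)) ζ (Xvec n j ζ) = _
    have hcomp : fderiv ℝ (fun ξ => f (z ξ)) ζ = (fderiv ℝ f (z ζ)).comp (fderiv ℝ z ζ) :=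
      fderiv_comp ζ (hfD _) (hzD ζ hζ)
    rw [show (fun ξ => f (u 0 ξ, u 1 ξ)) = fun ξ => f (z ξ) from rfl, hcomp]
    rw [ContinuousLinearMap.comp_apply]
    have hzv : fderiv ℝ z ζ (Xvec n j ζ) = (X n j (u 0) ζ, X n j (u 1) ζ) := by
      rw [hzdef, DifferentiableAt.fderiv_prodMk (huD 0 ζ hζ) (huD 1 ζ hζ)]
      rfl
    rw [hzv, clm_pair]
    ring
  -- second-order chain rule
  have step2 : ∀ ξ, ξ ∈ Ω → ∀ i j : Fin (2 * n),
      X n i (X n j (fun ξ => f (u 0 ξ, u 1 ξ))) ξ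
      = (∑ p : Fin 2, fderiv ℝ f (z ξ) (e2 p) * X n i (X n j (u p)) ξ)
        + ∑ p : Fin 2, ∑ q : Fin 2,
            fderiv ℝ (fun y => fderiv ℝ f y (e2 p)) (z ξ) (e2 q)
              * X n i (u q) ξ * X n j (u p) ξ := by
    intro ξ hξ i j
    have hev : X n j (fun ξ => f (u 0 ξ, u 1 ξ)) =ᶠ[nhds ξ] fun ζ =>
        fderiv ℝ f (z ζ) (e2 0) * X n j (u 0) ζ + fderiv ℝ f (z ζ) (e2 1) * X n j (u 1) ζ := by
      filter_upwards [hΩ.mem_nhds hξ] with ζ hζ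
      exact step1 ζ hζ j
    show fderiv ℝ (X n j (fun ξ => f (u 0 ξ, u 1 ξ))) ξ (Xvec n i ξ) = _
    rw [hev.fderiv_eq]
    have hFhas : ∀ p : Fin 2, HasFDerivAt (fun ζ => fderiv ℝ f (z ζ) (e2 p))
        ((fderiv ℝ (fun y => fderiv ℝ f y (e2 p)) (z ξ)).comp (fderiv ℝ z ξ)) ξ := by
      intro p
      exact (((hgD (e2 p)) (z ξ)).hasFDerivAt).comp ξ ((hzD ξ hξ).hasFDerivAt)
    have hGdiff : ∀ p : Fin 2, DifferentiableAt ℝ (X n j (u p)) ξ :=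
      fun p => X_differentiableAt (hu2 p ξ hξ) j
    have htot := (((hFhas 0).mul (hGdiff 0).hasFDerivAt).add
      ((hFhas 1).mul (hGdiff 1).hasFDerivAt))
    rw [show (fun ζ => fderiv ℝ f (z ζ) (e2 0) * X n j (u 0) ζ + fderiv ℝ f (z ζ) (e2 1) * X n j (u 1) ζ)
        = ((fun ζ => fderiv ℝ f (z ζ) (e2 0)) * X n j (u 0)
          + (fun ζ => fderiv ℝ f (z ζ) (e2 1)) * X n j (u 1)) from rfl, htot.fderiv]
    simp only [ContinuousLinearMap.add_apply, ContinuousLinearMap.coe_smul', Pi.smul_apply,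
      ContinuousLinearMap.coe_comp', Function.comp_apply, smul_eq_mul]
    have hzv : fderiv ℝ z ξ (Xvec n i ξ) = (X n i (u 0) ξ, X n i (u 1) ξ) := by
      rw [hzdef, DifferentiableAt.fderiv_prodMk (huD 0 ξ hξ) (huD 1 ξ hξ)]
      rfl
    rw [hzv]
    have hpair : ∀ p : Fin 2,
        (fderiv ℝ (fun y => fderiv ℝ f y (e2 p)) (z ξ)) (X n i (u 0) ξ, X n i (u 1) ξ)
        = X n i (u 0) ξ * (fderiv ℝ (fun y => fderiv ℝ f y (e2 p)) (z ξ)) (e2 0)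
          + X n i (u 1) ξ * (fderiv ℝ (fun y => fderiv ℝ f y (e2 p)) (z ξ)) (e2 1) :=
      fun p => clm_pair _ _ _
    rw [hpair 0, hpair 1]
    have hXX : ∀ p : Fin 2, (fderiv ℝ (X n j (u p)) ξ) (Xvec n i ξ)
        = X n i (X n j (u p)) ξ := fun p => rfl
    rw [hXX 0, hXX 1]
    simp only [Fin.sum_univ_two]
    ring
  -- the matrix-level identity
  have main : ∀ ξ, ξ ∈ Ω →
      Hmat n (fun ξ => f (u 0 ξ, u 1 ξ)) ξ
        = (fderiv ℝ f (z ξ) (e2 0)) • Hmat n (u 0) ξ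
          + (fderiv ℝ f (z ξ) (e2 1)) • Hmat n (u 1) ξ
          + Matrix.of (fun i j => ∑ p : Fin 2, ∑ q : Fin 2,
              fderiv ℝ (fun y => fderiv ℝ f y (e2 p)) (z ξ) (e2 q)
                * (X n i (u q) ξ * X n j (u p) ξ + X n j (u q) ξ * X n i (u p) ξ) / 2) := by
    intro ξ hξ
    ext i j
    simp only [Matrix.add_apply, Matrix.smul_apply, Matrix.of_apply, smul_eq_mul, Hmat]
    rw [step2 ξ hξ i j, step2 ξ hξ j i]
    simp only [Fin.sum_univ_two]
    ring
  constructor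
  · -- part 1: the quadratic-form identity
    intro ξ hξ h
    have hmatEq := main ξ hξ
    calc ∑ i, ∑ j, Hmat n (fun ξ => f (u 0 ξ, u 1 ξ)) ξ i j * h i * h j
        = ∑ i, ∑ j, ((fderiv ℝ f (z ξ) (e2 0)) * Hmat n (u 0) ξ i j
            + (fderiv ℝ f (z ξ) (e2 1)) * Hmat n (u 1) ξ i j
            + (∑ p : Fin 2, ∑ q : Fin 2,
                fderiv ℝ (fun y => fderiv ℝ f y (e2 p)) (z ξ) (e2 q)
                  * (X n i (u q) ξ * X n j (u p) ξ + X n j (u q) ξ * X n i (u p) ξ) / 2))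
            * h i * h j := by
          apply Finset.sum_congr rfl; intro i _
          apply Finset.sum_congr rfl; intro j _
          rw [hmatEq]
          simp only [Matrix.add_apply, Matrix.smul_apply, Matrix.of_apply, smul_eq_mul]
      _ = (∑ p, fderiv ℝ f (u 0 ξ, u 1 ξ) (e2 p) *
            ∑ i, ∑ j, Hmat n (u p) ξ i j * h i * h j)
          + ∑ p, ∑ q,
              fderiv ℝ (fun z => fderiv ℝ f z (e2 q)) (u 0 ξ, u 1 ξ) (e2 p) *
                (∑ i, X n i (u q) ξ * h i) * (∑ j, X n j (u p) ξ * h j) := by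
          calc ∑ i, ∑ j, ((fderiv ℝ f (z ξ) (e2 0)) * Hmat n (u 0) ξ i j
              + (fderiv ℝ f (z ξ) (e2 1)) * Hmat n (u 1) ξ i j
              + (∑ p : Fin 2, ∑ q : Fin 2,
                  fderiv ℝ (fun y => fderiv ℝ f y (e2 p)) (z ξ) (e2 q)
                    * (X n i (u q) ξ * X n j (u p) ξ + X n j (u q) ξ * X n i (u p) ξ) / 2))
              * h i * h j
              = fderiv ℝ f (z ξ) (e2 0) * (∑ i, ∑ j, Hmat n (u 0) ξ i j * h i * h j)
                + fderiv ℝ f (z ξ) (e2 1) * (∑ i, ∑ j, Hmat n (u 1) ξ i j * h i * h j)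
                + ∑ i, ∑ j, (∑ p : Fin 2, ∑ q : Fin 2,
                    fderiv ℝ (fun y => fderiv ℝ f y (e2 p)) (z ξ) (e2 q)
                      * (X n i (u q) ξ * X n j (u p) ξ + X n j (u q) ξ * X n i (u p) ξ) / 2)
                    * h i * h j := by
                simp only [Finset.mul_sum, ← Finset.sum_add_distrib]
                apply Finset.sum_congr rfl; intro i _
                apply Finset.sum_congr rfl; intro j _
                ring
            _ = (∑ p, fderiv ℝ f (u 0 ξ, u 1 ξ) (e2 p) *
                  ∑ i, ∑ j, Hmat n (u p) ξ i j * h i * h j)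
                + ∑ p, ∑ q,
                    fderiv ℝ (fun z => fderiv ℝ f z (e2 q)) (u 0 ξ, u 1 ξ) (e2 p) *
                      (∑ i, X n i (u q) ξ * h i) * (∑ j, X n j (u p) ξ * h j) := by
                rw [bsum (2 * n)
                    (fun q p => fderiv ℝ (fun y => fderiv ℝ f y (e2 p)) (z ξ) (e2 q))
                    (fun r i => X n i (u r) ξ) h]
                simp only [hzdef, Fin.sum_univ_two]
                ring
  · -- part 2: the cone conditions
    intro ξ hξ
    have hmatEq := main ξ hξ
    have hHsymm : ∀ p : Fin 2, (Hmat n (u p) ξ).IsSymm := by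
      intro p
      refine Matrix.IsSymm.ext fun i j => ?_
      simp only [Hmat, Matrix.of_apply]
      ring
    have hc : ∀ p : Fin 2, 0 ≤ fderiv ℝ f (z ξ) (e2 p) := fun p =>
      fderiv_e2_nonneg hf hmono1 hmono2 (z ξ) p
    have hBcone : InCone (Matrix.of (fun i j => ∑ p : Fin 2, ∑ q : Fin 2,
        fderiv ℝ (fun y => fderiv ℝ f y (e2 p)) (z ξ) (e2 q)
          * (X n i (u q) ξ * X n j (u p) ξ + X n j (u q) ξ * X n i (u p) ξ) / 2)) := by
      apply inCone_of_quadform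
      · refine Matrix.IsSymm.ext fun i j => ?_
        simp only [Matrix.of_apply]
        apply Finset.sum_congr rfl; intro p _
        apply Finset.sum_congr rfl; intro q _
        ring
      · intro v
        have := bsum (2 * n)
            (fun q p => fderiv ℝ (fun y => fderiv ℝ f y (e2 p)) (z ξ) (e2 q))
            (fun r i => X n i (u r) ξ) v
        simp only [Matrix.of_apply]
        rw [this]
        exact hessian_quadform_nonneg hf hfconv (z ξ)
          (fun r => ∑ i, X n i (u r) ξ * v i)
    have hcone : InCone (Hmat n (fun ξ => f (u 0 ξ, u 1 ξ)) ξ) := by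
      rw [hmatEq]
      have h0 : InCone (Hmat n (u 0) ξ) := ⟨hHsymm 0, (hconv 0 ξ hξ).1, (hconv 0 ξ hξ).2⟩
      have h1 : InCone (Hmat n (u 1) ξ) := ⟨hHsymm 1, (hconv 1 ξ hξ).1, (hconv 1 ξ hξ).2⟩
      exact InCone.add (InCone.add (InCone.smul h0 (hc 0)) (InCone.smul h1 (hc 1))) hBcone
    exact ⟨hcone.2.1, hcone.2.2⟩
end

section
/- In ℍⁿ, for any C³ function ω on an open set Ω ⊂ ℝ^{2n+1} and any fixed j ∈ {1,...,2n}, one has the identity Σ_{i≠j} ( X_j X_i² ω − X_i((X_iX_jω + X_jX_iω)/2) ) = (3/2) X_{j±n}[X_j, X_{j±n}]ω, where the sign is + if j ≤ n and − if j > n. -/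
noncomputable def cLin (n : ℕ) (i : Fin (2 * n)) : HPoint n →L[ℝ] ℝ :=
  if h : (i : ℕ) < n then
    (2 : ℝ) • ((ContinuousLinearMap.proj (⟨i, h⟩ : Fin n)).comp
      ((ContinuousLinearMap.fst ℝ (Fin n → ℝ) ℝ).comp
        (ContinuousLinearMap.snd ℝ (Fin n → ℝ) ((Fin n → ℝ) × ℝ))))
  else
    (-2 : ℝ) • ((ContinuousLinearMap.proj (⟨(i : ℕ) - n, by have := i.isLt; omega⟩ : Fin n)).comp
      (ContinuousLinearMap.fst ℝ (Fin n → ℝ) ((Fin n → ℝ) × ℝ)))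

noncomputable def vconst (n : ℕ) (i : Fin (2 * n)) : HPoint n :=
  if h : (i : ℕ) < n then (Pi.single ⟨i, h⟩ 1, 0, 0)
  else (0, Pi.single ⟨(i : ℕ) - n, by have := i.isLt; omega⟩ 1, 0)

noncomputable def Lmap (n : ℕ) (i : Fin (2 * n)) : HPoint n →L[ℝ] HPoint n :=
  (ContinuousLinearMap.inr ℝ (Fin n → ℝ) ((Fin n → ℝ) × ℝ)).comp
    ((ContinuousLinearMap.inr ℝ (Fin n → ℝ) ℝ).comp (cLin n i))

noncomputable def gam (n : ℕ) (i m : Fin (2 * n)) : ℝ := cLin n i (vconst n m)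

lemma cLin_apply (n : ℕ) (i : Fin (2 * n)) (ξ : HPoint n) :
    cLin n i ξ = if h : (i : ℕ) < n then 2 * ξ.2.1 ⟨i, h⟩
      else -2 * ξ.1 ⟨(i : ℕ) - n, by have := i.isLt; omega⟩ := by
  unfold cLin
  split <;> simp

lemma Xvec_eq (n : ℕ) (i : Fin (2 * n)) (ξ : HPoint n) :
    Xvec n i ξ = vconst n i + ((0 : Fin n → ℝ), (0 : Fin n → ℝ), cLin n i ξ) := by
  unfold Xvec vconst
  rw [cLin_apply]
  split <;> simp [Prod.ext_iff]

lemma Lmap_apply (n : ℕ) (i : Fin (2 * n)) (w : HPoint n) :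
    Lmap n i w = ((0 : Fin n → ℝ), (0 : Fin n → ℝ), cLin n i w) := by
  simp [Lmap]

lemma cLin_triple (n : ℕ) (i : Fin (2 * n)) (r : ℝ) :
    cLin n i ((0 : Fin n → ℝ), (0 : Fin n → ℝ), r) = 0 := by
  rw [cLin_apply]; split <;> simp

lemma cLin_Xvec (n : ℕ) (i m : Fin (2 * n)) (ξ : HPoint n) :
    cLin n i (Xvec n m ξ) = gam n i m := by
  rw [Xvec_eq, map_add, cLin_triple, gam, add_zero]

lemma triple_eq_smul (n : ℕ) (r : ℝ) :
    (((0 : Fin n → ℝ), (0 : Fin n → ℝ), r) : HPoint n)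
      = r • (((0 : Fin n → ℝ), (0 : Fin n → ℝ), (1 : ℝ)) : HPoint n) := by
  simp [Prod.ext_iff]

lemma Lmap_Xvec (n : ℕ) (i m : Fin (2 * n)) (ξ : HPoint n) :
    Lmap n i (Xvec n m ξ)
      = gam n i m • (((0 : Fin n → ℝ), (0 : Fin n → ℝ), (1 : ℝ)) : HPoint n) := by
  rw [Lmap_apply, cLin_Xvec, triple_eq_smul]

lemma hasFDerivAt_Xvec (n : ℕ) (i : Fin (2 * n)) (ξ : HPoint n) :
    HasFDerivAt (Xvec n i) (Lmap n i) ξ := by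
  have : Xvec n i = fun η => vconst n i + Lmap n i η := by
    funext η; rw [Xvec_eq, Lmap_apply]
  rw [this]
  exact (Lmap n i).hasFDerivAt.const_add _

lemma fderiv_Xvec (n : ℕ) (i : Fin (2 * n)) (ξ : HPoint n) :
    fderiv ℝ (Xvec n i) ξ = Lmap n i := (hasFDerivAt_Xvec n i ξ).fderiv

lemma diff_Xvec (n : ℕ) (i : Fin (2 * n)) (ξ : HPoint n) :
    DifferentiableAt ℝ (Xvec n i) ξ := (hasFDerivAt_Xvec n i ξ).differentiableAt

lemma gam_val (n : ℕ) (i m : Fin (2 * n)) :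
    gam n i m = if (i : ℕ) < n then (if (m : ℕ) = (i : ℕ) + n then 2 else 0)
      else (if (m : ℕ) + n = (i : ℕ) then -2 else 0) := by
  rw [gam, cLin_apply]
  unfold vconst
  rcases em ((i : ℕ) < n) with hi | hi <;>
    rcases em ((m : ℕ) < n) with hm | hm <;>
    simp only [hi, hm, dif_pos, dif_neg, if_pos, if_neg, not_false_eq_true] <;>
    simp [Pi.single_apply, Fin.ext_iff] <;>
    (try split_ifs) <;> first | rfl | omega

lemma gam_self (n : ℕ) (i : Fin (2 * n)) : gam n i i = 0 := by
  rw [gam_val]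
  have := i.isLt
  split <;> rw [if_neg (by omega)]
section Analytic

variable {n : ℕ}

/-- derivative of `η ↦ g η b` for a CLM-valued `g`. -/
lemma fderiv_apply_const {E F G : Type*} [NormedAddCommGroup E] [NormedSpace ℝ E]
    [NormedAddCommGroup F] [NormedSpace ℝ F] [NormedAddCommGroup G] [NormedSpace ℝ G]
    {g : E → F →L[ℝ] G} {ξ : E} (hg : DifferentiableAt ℝ g ξ) (b : F) :
    fderiv ℝ (fun η => g η b) ξ = (fderiv ℝ g ξ).flip b := by
  rw [fderiv_clm_apply hg (differentiableAt_const b)]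
  simp

lemma X_X (i m : Fin (2 * n)) (ω : HPoint n → ℝ) (η : HPoint n)
    (hω : ContDiffAt ℝ 2 ω η) :
    X n i (X n m ω) η
      = gam n m i * Dt n ω η
        + fderiv ℝ (fderiv ℝ ω) η (Xvec n i η) (Xvec n m η) := by
  have hc : DifferentiableAt ℝ (fderiv ℝ ω) η :=
    (hω.fderiv_right (m := 1) (by norm_num)).differentiableAt (by norm_num)
  have h := fderiv_clm_apply (𝕜 := ℝ) hc (diff_Xvec n m η)
  show fderiv ℝ (fun y => fderiv ℝ ω y (Xvec n m y)) η (Xvec n i η) = _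
  rw [h]
  rw [fderiv_Xvec]
  simp only [ContinuousLinearMap.add_apply, ContinuousLinearMap.coe_comp', Function.comp_apply,
    ContinuousLinearMap.flip_apply]
  rw [Lmap_Xvec, map_smul]
  rw [Dt, smul_eq_mul]



lemma XX_eventually (a b : Fin (2 * n)) (ω : HPoint n → ℝ) {Ω : Set (HPoint n)}
    (hΩ : IsOpen Ω) (hω : ContDiffOn ℝ 3 ω Ω) {ξ : HPoint n} (hξ : ξ ∈ Ω) :
    X n a (X n b ω) =ᶠ[nhds ξ]
      (fun η => gam n b a * fderiv ℝ ω η ((0, 0, 1) : HPoint n)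
        + fderiv ℝ (fderiv ℝ ω) η (Xvec n a η) (Xvec n b η)) := by
  filter_upwards [hΩ.mem_nhds hξ] with η hη
  have h := X_X a b ω η ((hω.contDiffAt (hΩ.mem_nhds hη)).of_le (by norm_num))
  simp only [Dt] at h
  exact h

lemma formula_diff (a b : Fin (2 * n)) (ω : HPoint n → ℝ) {ξ : HPoint n}
    (hω : ContDiffAt ℝ 3 ω ξ) :
    DifferentiableAt ℝ (fun η => gam n b a * fderiv ℝ ω η ((0, 0, 1) : HPoint n)
      + fderiv ℝ (fderiv ℝ ω) η (Xvec n a η) (Xvec n b η)) ξ := by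
  have d1 : DifferentiableAt ℝ (fderiv ℝ ω) ξ :=
    (hω.fderiv_right (m := 2) (by norm_num)).differentiableAt (by norm_num)
  have d2 : DifferentiableAt ℝ (fderiv ℝ (fderiv ℝ ω)) ξ :=
    ((hω.fderiv_right (m := 2) (by norm_num)).fderiv_right (m := 1)
      (by norm_num)).differentiableAt (by norm_num)
  exact ((d1.clm_apply (differentiableAt_const _)).const_mul _).add
    ((d2.clm_apply (diff_Xvec n a ξ)).clm_apply (diff_Xvec n b ξ))

lemma fderiv_formula (a b : Fin (2 * n)) (ω : HPoint n → ℝ) {ξ : HPoint n}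
    (hω : ContDiffAt ℝ 3 ω ξ) (w : HPoint n) :
    fderiv ℝ (fun η => gam n b a * fderiv ℝ ω η ((0, 0, 1) : HPoint n)
      + fderiv ℝ (fderiv ℝ ω) η (Xvec n a η) (Xvec n b η)) ξ w
    = gam n b a * fderiv ℝ (fderiv ℝ ω) ξ w ((0, 0, 1) : HPoint n)
      + cLin n b w * fderiv ℝ (fderiv ℝ ω) ξ (Xvec n a ξ) ((0, 0, 1) : HPoint n)
      + cLin n a w * fderiv ℝ (fderiv ℝ ω) ξ ((0, 0, 1) : HPoint n) (Xvec n b ξ)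
      + fderiv ℝ (fderiv ℝ (fderiv ℝ ω)) ξ w (Xvec n a ξ) (Xvec n b ξ) := by
  have d1 : DifferentiableAt ℝ (fderiv ℝ ω) ξ :=
    (hω.fderiv_right (m := 2) (by norm_num)).differentiableAt (by norm_num)
  have d2 : DifferentiableAt ℝ (fderiv ℝ (fderiv ℝ ω)) ξ :=
    ((hω.fderiv_right (m := 2) (by norm_num)).fderiv_right (m := 1)
      (by norm_num)).differentiableAt (by norm_num)
  have dA : DifferentiableAt ℝ (fun η => fderiv ℝ ω η ((0, 0, 1) : HPoint n)) ξ :=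
    d1.clm_apply (differentiableAt_const _)
  have dc : DifferentiableAt ℝ (fun η => fderiv ℝ (fderiv ℝ ω) η (Xvec n a η)) ξ :=
    d2.clm_apply (diff_Xvec n a ξ)
  have dB : DifferentiableAt ℝ
      (fun η => fderiv ℝ (fderiv ℝ ω) η (Xvec n a η) (Xvec n b η)) ξ :=
    dc.clm_apply (diff_Xvec n b ξ)
  rw [fderiv_fun_add (dA.const_mul _) dB, ContinuousLinearMap.add_apply,
    fderiv_const_mul dA, fderiv_apply_const d1,
    fderiv_clm_apply dc (diff_Xvec n b ξ), fderiv_clm_apply d2 (diff_Xvec n a ξ),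
    fderiv_Xvec, fderiv_Xvec]
  simp only [ContinuousLinearMap.smul_apply, ContinuousLinearMap.add_apply,
    ContinuousLinearMap.coe_comp', Function.comp_apply, ContinuousLinearMap.flip_apply,
    smul_eq_mul, Lmap_apply]
  rw [triple_eq_smul n (cLin n b w), triple_eq_smul n (cLin n a w)]
  simp only [map_smul, smul_eq_mul, ContinuousLinearMap.smul_apply]
  ring

lemma X_X_X (p m i : Fin (2 * n)) (ω : HPoint n → ℝ) {Ω : Set (HPoint n)}
    (hΩ : IsOpen Ω) (hω : ContDiffOn ℝ 3 ω Ω) {ξ : HPoint n} (hξ : ξ ∈ Ω) :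
    X n p (X n m (X n i ω)) ξ
      = gam n i m * fderiv ℝ (fderiv ℝ ω) ξ (Xvec n p ξ) ((0, 0, 1) : HPoint n)
        + gam n i p * fderiv ℝ (fderiv ℝ ω) ξ (Xvec n m ξ) ((0, 0, 1) : HPoint n)
        + gam n m p * fderiv ℝ (fderiv ℝ ω) ξ ((0, 0, 1) : HPoint n) (Xvec n i ξ)
        + fderiv ℝ (fderiv ℝ (fderiv ℝ ω)) ξ (Xvec n p ξ) (Xvec n m ξ) (Xvec n i ξ) := by
  have h3 : ContDiffAt ℝ 3 ω ξ := hω.contDiffAt (hΩ.mem_nhds hξ)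
  have hev := XX_eventually m i ω hΩ hω hξ
  show fderiv ℝ (X n m (X n i ω)) ξ (Xvec n p ξ) = _
  rw [hev.fderiv_eq, fderiv_formula m i ω h3 (Xvec n p ξ), cLin_Xvec, cLin_Xvec]

lemma symm2 (ω : HPoint n → ℝ) {Ω : Set (HPoint n)} (hΩ : IsOpen Ω)
    (hω : ContDiffOn ℝ 2 ω Ω) {ξ : HPoint n} (hξ : ξ ∈ Ω) (a b : HPoint n) :
    fderiv ℝ (fderiv ℝ ω) ξ a b = fderiv ℝ (fderiv ℝ ω) ξ b a := by
  apply second_derivative_symmetric_of_eventually (f := ω) (f' := fderiv ℝ ω)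
  · filter_upwards [hΩ.mem_nhds hξ] with η hη
    exact ((hω.contDiffAt (hΩ.mem_nhds hη)).differentiableAt (by norm_num)).hasFDerivAt
  · exact (((hω.contDiffAt (hΩ.mem_nhds hξ)).fderiv_right (m := 1)
      (by norm_num)).differentiableAt (by norm_num)).hasFDerivAt

lemma symm3a (ω : HPoint n → ℝ) {Ω : Set (HPoint n)} (hΩ : IsOpen Ω)
    (hω : ContDiffOn ℝ 3 ω Ω) {ξ : HPoint n} (hξ : ξ ∈ Ω) (a b c : HPoint n) :
    fderiv ℝ (fderiv ℝ (fderiv ℝ ω)) ξ a b c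
      = fderiv ℝ (fderiv ℝ (fderiv ℝ ω)) ξ b a c := by
  have h := second_derivative_symmetric_of_eventually (f := fderiv ℝ ω)
      (f' := fderiv ℝ (fderiv ℝ ω)) (x := ξ)
      (f'' := fderiv ℝ (fderiv ℝ (fderiv ℝ ω)) ξ) ?_ ?_ a b
  · rw [h]
  · filter_upwards [hΩ.mem_nhds hξ] with η hη
    exact (((hω.contDiffAt (hΩ.mem_nhds hη)).fderiv_right (m := 2)
      (by norm_num)).differentiableAt (by norm_num)).hasFDerivAt
  · exact ((((hω.contDiffAt (hΩ.mem_nhds hξ)).fderiv_right (m := 2)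
      (by norm_num)).fderiv_right (m := 1) (by norm_num)).differentiableAt (by norm_num)).hasFDerivAt

lemma symm3b (ω : HPoint n → ℝ) {Ω : Set (HPoint n)} (hΩ : IsOpen Ω)
    (hω : ContDiffOn ℝ 3 ω Ω) {ξ : HPoint n} (hξ : ξ ∈ Ω) (a b c : HPoint n) :
    fderiv ℝ (fderiv ℝ (fderiv ℝ ω)) ξ a b c
      = fderiv ℝ (fderiv ℝ (fderiv ℝ ω)) ξ a c b := by
  have d2 : DifferentiableAt ℝ (fderiv ℝ (fderiv ℝ ω)) ξ :=
    (((hω.contDiffAt (hΩ.mem_nhds hξ)).fderiv_right (m := 2)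
      (by norm_num)).fderiv_right (m := 1) (by norm_num)).differentiableAt (by norm_num)
  have key : ∀ u v : HPoint n,
      fderiv ℝ (fun η => fderiv ℝ (fderiv ℝ ω) η u v) ξ a
        = fderiv ℝ (fderiv ℝ (fderiv ℝ ω)) ξ a u v := by
    intro u v
    rw [fderiv_apply_const (d2.clm_apply (differentiableAt_const u)) v,
      ContinuousLinearMap.flip_apply, fderiv_apply_const d2 u,
      ContinuousLinearMap.flip_apply]
  have hev : (fun η => fderiv ℝ (fderiv ℝ ω) η b c)
      =ᶠ[nhds ξ] (fun η => fderiv ℝ (fderiv ℝ ω) η c b) := by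
    filter_upwards [hΩ.mem_nhds hξ] with η hη
    exact symm2 ω hΩ (hω.of_le (by norm_num)) hη b c
  calc fderiv ℝ (fderiv ℝ (fderiv ℝ ω)) ξ a b c
      = fderiv ℝ (fun η => fderiv ℝ (fderiv ℝ ω) η b c) ξ a := (key b c).symm
    _ = fderiv ℝ (fun η => fderiv ℝ (fderiv ℝ ω) η c b) ξ a := by rw [hev.fderiv_eq]
    _ = fderiv ℝ (fderiv ℝ (fderiv ℝ ω)) ξ a c b := key c b

lemma X_comm (i j : Fin (2 * n)) (ω : HPoint n → ℝ) {Ω : Set (HPoint n)}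
    (hΩ : IsOpen Ω) (hω : ContDiffOn ℝ 3 ω Ω) {ξ : HPoint n} (hξ : ξ ∈ Ω) :
    X n i (fun η => X n j (X n i ω) η - X n i (X n j ω) η) ξ
      = (gam n i j - gam n j i)
        * fderiv ℝ (fderiv ℝ ω) ξ (Xvec n i ξ) ((0, 0, 1) : HPoint n) := by
  have d1 : DifferentiableAt ℝ (fderiv ℝ ω) ξ :=
    ((hω.contDiffAt (hΩ.mem_nhds hξ)).fderiv_right (m := 2)
      (by norm_num)).differentiableAt (by norm_num)
  have hev : (fun η => X n j (X n i ω) η - X n i (X n j ω) η) =ᶠ[nhds ξ]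
      (fun η => (gam n i j - gam n j i) * fderiv ℝ ω η ((0, 0, 1) : HPoint n)) := by
    filter_upwards [hΩ.mem_nhds hξ] with η hη
    have h2 : ContDiffAt ℝ 2 ω η := (hω.contDiffAt (hΩ.mem_nhds hη)).of_le (by norm_num)
    have e1 := X_X j i ω η h2
    have e2 := X_X i j ω η h2
    simp only [Dt] at e1 e2
    rw [e1, e2, symm2 ω hΩ (hω.of_le (by norm_num)) hη (Xvec n j η) (Xvec n i η)]
    ring
  show fderiv ℝ (fun η => X n j (X n i ω) η - X n i (X n j ω) η) ξ (Xvec n i ξ) = _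
  rw [hev.fderiv_eq,
    fderiv_const_mul (d1.clm_apply (differentiableAt_const _)) _,
    fderiv_apply_const d1]
  simp only [ContinuousLinearMap.smul_apply, ContinuousLinearMap.flip_apply, smul_eq_mul]

lemma term_eq (i j : Fin (2 * n)) (ω : HPoint n → ℝ) {Ω : Set (HPoint n)}
    (hΩ : IsOpen Ω) (hω : ContDiffOn ℝ 3 ω Ω) {ξ : HPoint n} (hξ : ξ ∈ Ω) :
    X n j (X n i (X n i ω)) ξ
      - X n i (fun η => (X n i (X n j ω) η + X n j (X n i ω) η) / 2) ξ
    = (3 / 2) * X n i (fun η => X n j (X n i ω) η - X n i (X n j ω) η) ξ := by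
  have h3 : ContDiffAt ℝ 3 ω ξ := hω.contDiffAt (hΩ.mem_nhds hξ)
  have dA : DifferentiableAt ℝ (X n i (X n j ω)) ξ :=
    (XX_eventually i j ω hΩ hω hξ).differentiableAt_iff.mpr (formula_diff i j ω h3)
  have dB : DifferentiableAt ℝ (X n j (X n i ω)) ξ :=
    (XX_eventually j i ω hΩ hω hξ).differentiableAt_iff.mpr (formula_diff j i ω h3)
  have hmid : X n i (fun η => (X n i (X n j ω) η + X n j (X n i ω) η) / 2) ξ
      = (X n i (X n i (X n j ω)) ξ + X n i (X n j (X n i ω)) ξ) / 2 := by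
    show fderiv ℝ (fun η => (X n i (X n j ω) η + X n j (X n i ω) η) / 2) ξ (Xvec n i ξ) = _
    have heq : (fun η => (X n i (X n j ω) η + X n j (X n i ω) η) / 2)
        = fun η => (2⁻¹ : ℝ) * (X n i (X n j ω) η + X n j (X n i ω) η) := by
      funext η; ring
    rw [heq, fderiv_const_mul (a := fun η => X n i (X n j ω) η + X n j (X n i ω) η) (dA.add dB), fderiv_fun_add dA dB]
    show _ = (fderiv ℝ (X n i (X n j ω)) ξ (Xvec n i ξ)
      + fderiv ℝ (X n j (X n i ω)) ξ (Xvec n i ξ)) / 2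
    simp only [ContinuousLinearMap.smul_apply, ContinuousLinearMap.add_apply, smul_eq_mul]
    ring
  rw [hmid, X_X_X j i i ω hΩ hω hξ, X_X_X i i j ω hΩ hω hξ, X_X_X i j i ω hΩ hω hξ,
    X_comm i j ω hΩ hω hξ]
  have s2 := symm2 ω hΩ (hω.of_le (by norm_num)) hξ ((0, 0, 1) : HPoint n) (Xvec n i ξ)
  have t1 := symm3b ω hΩ hω hξ (Xvec n i ξ) (Xvec n i ξ) (Xvec n j ξ)
  have t2 := symm3a ω hΩ hω hξ (Xvec n i ξ) (Xvec n j ξ) (Xvec n i ξ)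
  simp only [gam_self, s2, t1, t2]
  ring

/-- The divergence-structure identity used in the comparison principle: for a `C³`
function `ω` on an open `Ω ⊆ ℝ^{2n+1}` and a fixed `j`, with `k = j + n` if `j ≤ n`
and `k = j − n` if `j > n`,
`Σ_{i≠j} ( X_j X_i² ω − X_i((X_iX_jω + X_jX_iω)/2) ) = (3/2) X_k [X_j, X_k] ω`. -/
theorem stmt_16 (n : ℕ) (Ω : Set (HPoint n)) (hΩ : IsOpen Ω)
    (ω : HPoint n → ℝ) (hω : ContDiffOn ℝ 3 ω Ω)
    (j k : Fin (2 * n))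
    (hk : (k : ℕ) = if (j : ℕ) < n then (j : ℕ) + n else (j : ℕ) - n) :
    ∀ ξ ∈ Ω,
      ∑ i ∈ Finset.univ.erase j,
          (X n j (X n i (X n i ω)) ξ
            - X n i (fun η => (X n i (X n j ω) η + X n j (X n i ω) η) / 2) ξ)
        = (3 / 2) * X n k (fun η => X n j (X n k ω) η - X n k (X n j ω) η) ξ := by
  intro ξ hξ
  have hn : 0 < n := by have := j.isLt; omega
  have hj2 := j.isLt
  have hkj : k ≠ j := by
    intro h
    rw [h] at hk
    rcases Nat.lt_or_ge (j : ℕ) n with hj | hj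
    · rw [if_pos hj] at hk; omega
    · rw [if_neg (not_lt.mpr hj)] at hk; omega
  have hkmem : k ∈ Finset.univ.erase j := Finset.mem_erase.mpr ⟨hkj, Finset.mem_univ k⟩
  rw [Finset.sum_eq_single_of_mem k hkmem ?_]
  · exact term_eq k j ω hΩ hω hξ
  · intro i hi hik
    have hivk : (i : ℕ) ≠ (k : ℕ) := fun h => hik (Fin.val_injective h)
    have hi2 := i.isLt
    rw [term_eq i j ω hΩ hω hξ, X_comm i j ω hΩ hω hξ]
    have g1 : gam n i j = 0 := by
      rw [gam_val]
      rcases Nat.lt_or_ge (j : ℕ) n with hj | hj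
      · rw [if_pos hj] at hk
        split_ifs <;> first | rfl | (exfalso; omega)
      · rw [if_neg (not_lt.mpr hj)] at hk
        split_ifs <;> first | rfl | (exfalso; omega)
    have g2 : gam n j i = 0 := by
      rw [gam_val]
      rcases Nat.lt_or_ge (j : ℕ) n with hj | hj
      · rw [if_pos hj] at hk
        split_ifs <;> first | rfl | (exfalso; omega)
      · rw [if_neg (not_lt.mpr hj)] at hk
        split_ifs <;> first | rfl | (exfalso; omega)
    rw [g1, g2]
    ring

end Analytic
end
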